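/- Let H_EG be the (q^2-1)×(q^2-1) binary circulant whose rows are the incidence vectors of the q^2-1 lines of EG(2,q) not through the origin, indexed by the nonzero points α^0, α, ..., α^{q^2-2} of GF(q^2). Suppose q - 1 = b·l and set c = (q+1)b. Then applying the permutation π to the rows and columns decomposes H_EG into a c×c array of l×l binary matrices each of which is either a circulant permutation matrix or a zero matrix, and each row block and each column block of the array contains exactly q circulant permutation matrices and (q+1)b - q zero matrices. -/

import Mathlib

open scoped Classical

namespace Paper

/-- A line of the affine plane EG(2,q) realized in the 2-dimensional GF(q)-vector space `K`. -/
def IsLine (F : Type*) [Field F] {K : Type*} [Field K] [Algebra F K] (L : Set K) : Prop :=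
  ∃ x z : K, x ≠ 0 ∧ L = {p | ∃ c : F, p = z + c • x}

/-- Entry `(i,j)` of the `n×n` binary circulant with generator `w`: `w ((j - i) mod n)`. -/
def psiEnt (n : ℕ) (w : ℕ → ZMod 2) (i j : ℕ) : ZMod 2 := w ((j + n - i) % n)

/-- The permutation `π`: the entry in position `i·l + t` is `t·c + i`. -/
def piPerm (c l : ℕ) (a : ℕ) : ℕ := (a % l) * c + a / l

/-- The `(i,j)` block (an `l×l` binary matrix) of the `π`-decomposition of the `n×n`
circulant with generator `w` into a `c×c` array. -/
def blk (n c l : ℕ) (w : ℕ → ZMod 2) (i j : Fin c) : Matrix (Fin l) (Fin l) (ZMod 2) :=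
  fun s t => psiEnt n w (piPerm c l (i.val * l + s.val)) (piPerm c l (j.val * l + t.val))

/-- An `l×l` circulant permutation matrix: a circulant whose each row has exactly one `1`. -/
def IsCPM (l : ℕ) (M : Matrix (Fin l) (Fin l) (ZMod 2)) : Prop :=
  ∃ d : ℕ, ∀ s t : Fin l, M s t = if (t.val + l - s.val) % l = d % l then 1 else 0

private lemma mod_shift (c w u : ℕ) (hw : w < c) (hu : u < c) :
    (u + c - w) % c = if w ≤ u then u - w else u + c - w := by
  split
  · next h =>
    have h1 : u + c - w = (u - w) + c := by omega
    rw [h1, Nat.add_mod_right, Nat.mod_eq_of_lt (by omega)]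
  · next h => exact Nat.mod_eq_of_lt (by omega)

private lemma mod_block (l c e r : ℕ) (hl : 0 < l) (hr : r < c) :
    (e * c + r) % (l * c) = (e % l) * c + r := by
  have he : e * c + r = (e % l) * c + r + (e / l) * (l * c) := by
    conv_lhs => rw [← Nat.mod_add_div e l]
    ring
  rw [he, Nat.add_mul_mod_self_right]
  have h1 : (e % l) * c ≤ (l - 1) * c :=
    Nat.mul_le_mul_right _ (by have := Nat.mod_lt e hl; omega)
  have h2 : (l - 1) * c = l * c - c := by rw [Nat.sub_mul, one_mul]
  have h3 : c ≤ l * c := Nat.le_mul_of_pos_left _ hl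
  exact Nat.mod_eq_of_lt (by omega)

private lemma piPerm_eval (c l i s : ℕ) (hl : 0 < l) (hs : s < l) :
    piPerm c l (i * l + s) = s * c + i := by
  unfold piPerm
  rw [mul_comm i l, Nat.mul_add_mod, Nat.mod_eq_of_lt hs]
  congr 1
  rw [Nat.mul_add_div hl, Nat.div_eq_of_lt hs, add_zero]

/-- CPM-decomposition of the circulant built from the incidence vectors of the lines of
EG(2,q) not through the origin: with `q - 1 = b·l` and `c = (q+1)b`, the `π`-decomposition
of the `(q²-1)×(q²-1)` circulant is a `c×c` array whose blocks are each a circulant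
permutation matrix or a zero matrix, with exactly `q` CPMs and `(q+1)b - q` zero matrices
in each row block and each column block. -/
theorem cpm_decomposition (F K : Type*) [Field F] [Field K] [Algebra F K]
    [Fintype F] [Fintype K] (q b l : ℕ) (hq : Fintype.card F = q)
    (hdim : Module.finrank F K = 2) (hbl : b * l = q - 1) (hb : 0 < b) (hl : 0 < l)
    (α : K) (hα : IsPrimitiveRoot α (q ^ 2 - 1))
    (L : Set K) (hL : IsLine F L) (h0 : (0 : K) ∉ L)
    (v : ℕ → ZMod 2) (hv : ∀ j, v j = if α ^ j ∈ L then 1 else 0) :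
    (∀ i j : Fin ((q + 1) * b),
        IsCPM l (blk (q ^ 2 - 1) ((q + 1) * b) l v i j) ∨
          blk (q ^ 2 - 1) ((q + 1) * b) l v i j = 0) ∧
    (∀ i : Fin ((q + 1) * b),
        (Finset.univ.filter fun j : Fin ((q + 1) * b) =>
            IsCPM l (blk (q ^ 2 - 1) ((q + 1) * b) l v i j)).card = q ∧
        (Finset.univ.filter fun j : Fin ((q + 1) * b) =>
            blk (q ^ 2 - 1) ((q + 1) * b) l v i j = 0).card = (q + 1) * b - q) ∧
    (∀ j : Fin ((q + 1) * b),
        (Finset.univ.filter fun i : Fin ((q + 1) * b) =>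
            IsCPM l (blk (q ^ 2 - 1) ((q + 1) * b) l v i j)).card = q ∧
        (Finset.univ.filter fun i : Fin ((q + 1) * b) =>
            blk (q ^ 2 - 1) ((q + 1) * b) l v i j = 0).card = (q + 1) * b - q) := by
  obtain ⟨d, z, hd, hLeq⟩ := hL
  have hq2 : 2 ≤ q := hq ▸ Fintype.one_lt_card
  set n := q ^ 2 - 1 with hndef
  set c := (q + 1) * b with hcdef
  have hc : 0 < c := by positivity
  have hnlc : n = l * c := by
    have h1 : n = (q + 1) * (q - 1) := by
      obtain ⟨p, rfl⟩ : ∃ p, q = p + 2 := ⟨q - 2, by omega⟩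
      have e : (p + 2) ^ 2 = (p + 3) * (p + 1) + 1 := by ring
      have e2 : p + 2 + 1 = p + 3 := rfl
      have e3 : p + 2 - 1 = p + 1 := rfl
      rw [hndef, e2, e3]
      omega
    rw [← hbl] at h1
    rw [h1, hcdef]
    ring
  have hn0 : 0 < n := by rw [hnlc]; positivity
  have hα0 : α ≠ 0 := by
    intro h
    have h1 := hα.pow_eq_one
    rw [h, zero_pow hn0.ne'] at h1
    exact zero_ne_one h1
  have hcardK : Fintype.card K = q ^ 2 := by
    rw [← hq, ← hdim]; exact Module.card_eq_pow_finrank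
  have hcardU : Fintype.card Kˣ = n := by
    rw [Fintype.card_units, hcardK]
  set αu : Kˣ := Units.mk0 α hα0 with hαu
  have hord : orderOf αu = n := by
    have h1 : orderOf α = n := (hα.eq_orderOf).symm
    rw [← h1, ← orderOf_units, hαu]; rfl
  have hbij : Function.Bijective (fun m : Fin n => αu ^ (m : ℕ)) := by
    rw [Fintype.bijective_iff_injective_and_card]
    constructor
    · intro m₁ m₂ h
      have h2 : α ^ (m₁ : ℕ) = α ^ (m₂ : ℕ) := by
        have := congrArg Units.val h
        simpa [hαu] using this
      exact Fin.ext (hα.pow_inj m₁.isLt m₂.isLt h2)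
    · simp [hcardU]
  have hsurj : ∀ x : K, ∃ m, m < n ∧ (x ≠ 0 → α ^ m = x) := by
    intro x
    by_cases hx : x = 0
    · exact ⟨0, hn0, fun h => absurd hx h⟩
    · obtain ⟨m, hm⟩ := hbij.2 (Units.mk0 x hx)
      refine ⟨m, m.isLt, fun _ => ?_⟩
      have := congrArg Units.val hm
      simpa [hαu] using this
  choose dl hdl hdle using hsurj
  -- every root of x^q = x is in the image of F
  have key5 : ∀ x : K, x ^ q = x → ∃ f : F, algebraMap F K f = x := by
    intro x hx
    by_contra hno
    push_neg at hno
    set P : Polynomial K := Polynomial.X ^ q - Polynomial.X with hPdef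
    have hdeg : P.degree = q := by
      rw [hPdef]
      rw [Polynomial.degree_sub_eq_left_of_degree_lt, Polynomial.degree_X_pow]
      rw [Polynomial.degree_X_pow, Polynomial.degree_X]
      exact_mod_cast (by omega : 1 < q)
    have hP0 : P ≠ 0 := by
      intro h
      rw [h, Polynomial.degree_zero] at hdeg
      exact absurd hdeg (by simp)
    have hsub : insert x (Finset.univ.image (algebraMap F K)) ⊆ P.roots.toFinset := by
      intro y hy
      rw [Multiset.mem_toFinset, Polynomial.mem_roots hP0]
      simp only [Finset.mem_insert, Finset.mem_image] at hy
      have hyq : y ^ q = y := by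
        rcases hy with rfl | ⟨f, _, rfl⟩
        · exact hx
        · rw [← map_pow, ← hq, FiniteField.pow_card]
      simp [Polynomial.IsRoot, hPdef, hyq]
    have hcard1 : (insert x (Finset.univ.image (algebraMap F K))).card = q + 1 := by
      rw [Finset.card_insert_of_notMem, Finset.card_image_of_injective _
        (algebraMap F K).injective, Finset.card_univ, hq]
      simp only [Finset.mem_image, Finset.mem_univ, true_and]
      rintro ⟨f, hf⟩
      exact hno f hf
    have hle : (P.roots.toFinset).card ≤ q := by
      calc P.roots.toFinset.card ≤ Multiset.card P.roots := P.roots.toFinset_card_le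
      _ ≤ P.natDegree := Polynomial.card_roots' P
      _ = q := Polynomial.natDegree_eq_of_degree_eq_some hdeg
    have := Finset.card_le_card hsub
    omega
  have hβ : ∃ f : F, algebraMap F K f = α ^ c := by
    apply key5
    have h1 : (α ^ c) ^ (q - 1) = 1 := by
      rw [← pow_mul]
      have h2 : c * (q - 1) = n * b := by rw [← hbl, hnlc]; ring
      rw [h2, pow_mul, hα.pow_eq_one, one_pow]
    calc (α ^ c) ^ q = (α ^ c) ^ (q - 1) * (α ^ c) ^ 1 := by
          rw [← pow_add]; congr 1; omega
    _ = α ^ c := by rw [h1, one_mul, pow_one]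
  have key5e : ∀ e : ℕ, ∃ f : F, algebraMap F K f = α ^ (e * c) := by
    obtain ⟨f, hf⟩ := hβ
    intro e
    exact ⟨f ^ e, by rw [map_pow, hf, ← pow_mul, mul_comm]⟩
  -- a line not through the origin meets each line through the origin at most once
  have key1 : ∀ x : K, x ≠ 0 → ∀ f₁ f₂ : F, f₁ • x ∈ L → f₂ • x ∈ L → f₁ = f₂ := by
    intro x hx f₁ f₂ h1 h2
    by_contra hne
    rw [hLeq] at h1 h2
    obtain ⟨a₁, ha₁⟩ := h1
    obtain ⟨a₂, ha₂⟩ := h2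
    rw [Algebra.smul_def] at ha₁ ha₂
    rw [Algebra.smul_def (R := F)] at ha₁ ha₂
    have hinj : Function.Injective (algebraMap F K) := (algebraMap F K).injective
    have hu : algebraMap F K f₁ - algebraMap F K f₂ ≠ 0 := by
      rw [sub_ne_zero]
      exact fun h => hne (hinj h)
    set w : F := (f₁ - f₂)⁻¹ * (a₁ - a₂) with hw
    have hgw : algebraMap F K w =
        (algebraMap F K f₁ - algebraMap F K f₂)⁻¹ *
          (algebraMap F K a₁ - algebraMap F K a₂) := by
      rw [hw, map_mul, map_inv₀, map_sub, map_sub]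
    have hxw : x = algebraMap F K w * d := by
      have hsubeq : (algebraMap F K f₁ - algebraMap F K f₂) * x =
          (algebraMap F K a₁ - algebraMap F K a₂) * d := by
        linear_combination ha₁ - ha₂
      rw [hgw, inv_mul_eq_div, div_mul_eq_mul_div, eq_div_iff hu]
      linear_combination hsubeq
    apply h0
    rw [hLeq]
    refine ⟨a₁ - f₁ * w, ?_⟩
    rw [Algebra.smul_def, map_sub, map_mul]
    have hthis : algebraMap F K f₁ * x = z + algebraMap F K a₁ * d := ha₁
    rw [hxw] at hthis
    linear_combination hthis
  have hltn : ∀ e r : ℕ, e < l → r < c → e * c + r < n := by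
    intro e r he hr
    rw [hnlc]
    have h1 : e * c ≤ (l - 1) * c := Nat.mul_le_mul_right _ (by omega)
    have h2 : (l - 1) * c = l * c - c := by rw [Nat.sub_mul, one_mul]
    have h3 : c ≤ l * c := Nat.le_mul_of_pos_left _ hl
    omega
  have key6 : ∀ r e₁ e₂ : ℕ, r < c → e₁ < l → e₂ < l →
      α ^ (e₁ * c + r) ∈ L → α ^ (e₂ * c + r) ∈ L → e₁ = e₂ := by
    intro r e₁ e₂ hr he₁ he₂ h1 h2
    obtain ⟨f₁, hf₁⟩ := key5e e₁
    obtain ⟨f₂, hf₂⟩ := key5e e₂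
    have hx : α ^ r ≠ 0 := pow_ne_zero _ hα0
    have hm1 : f₁ • α ^ r ∈ L := by rw [Algebra.smul_def, hf₁, ← pow_add]; exact h1
    have hm2 : f₂ • α ^ r ∈ L := by rw [Algebra.smul_def, hf₂, ← pow_add]; exact h2
    have hff := key1 _ hx f₁ f₂ hm1 hm2
    have heq : α ^ (e₁ * c + r) = α ^ (e₂ * c + r) := by
      rw [pow_add, pow_add, ← hf₁, ← hf₂, hff]
    have := hα.pow_inj (hltn e₁ r he₁ hr) (hltn e₂ r he₂ hr) heq
    have := Nat.eq_of_mul_eq_mul_right hc (show e₁ * c = e₂ * c by omega)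
    exact this
  set Pred : ℕ → Prop := fun r => ∃ e, e < l ∧ α ^ (e * c + r) ∈ L with hPreddef
  -- counting: the number of residues r < c with Pred r is exactly q
  have hpmem : ∀ f : F, z + algebraMap F K f * d ∈ L := by
    intro f
    rw [hLeq]
    exact ⟨f, by rw [Algebra.smul_def]⟩
  have hpne : ∀ f : F, z + algebraMap F K f * d ≠ 0 :=
    fun f h => h0 (h ▸ hpmem f)
  have hpeq : ∀ f : F, α ^ dl (z + algebraMap F K f * d) = z + algebraMap F K f * d :=
    fun f => hdle _ (hpne f)
  have hRcard : ((Finset.range c).filter Pred).card = q := by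
    have hbijcard : (Finset.univ : Finset F).card = ((Finset.range c).filter Pred).card := by
      refine Finset.card_bij (fun f _ => dl (z + algebraMap F K f * d) % c) ?_ ?_ ?_
      · intro f _
        rw [Finset.mem_filter, Finset.mem_range]
        refine ⟨Nat.mod_lt _ hc, ?_⟩
        set m := dl (z + algebraMap F K f * d) with hm
        refine ⟨m / c, ?_, ?_⟩
        · rw [Nat.div_lt_iff_lt_mul hc, ← hnlc]; exact hdl _
        · have h1 : m / c * c + m % c = m := by
            have h := Nat.div_add_mod m c; have h' : c * (m / c) = m / c * c := Nat.mul_comm _ _; omega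
          rw [h1, hpeq f]
          exact hpmem f
      · intro f₁ _ f₂ _ hEq
        set m₁ := dl (z + algebraMap F K f₁ * d) with hm₁
        set m₂ := dl (z + algebraMap F K f₂ * d) with hm₂
        have hd₁ : m₁ / c * c + m₁ % c = m₁ := by have h := Nat.div_add_mod m₁ c; have h' : c * (m₁ / c) = m₁ / c * c := Nat.mul_comm _ _; omega
        have hd₂ : m₂ / c * c + m₂ % c = m₂ := by have h := Nat.div_add_mod m₂ c; have h' : c * (m₂ / c) = m₂ / c * c := Nat.mul_comm _ _; omega
        have he₁ : m₁ / c < l := by rw [Nat.div_lt_iff_lt_mul hc, ← hnlc]; exact hdl _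
        have he₂ : m₂ / c < l := by rw [Nat.div_lt_iff_lt_mul hc, ← hnlc]; exact hdl _
        have hL₁ : α ^ (m₁ / c * c + m₁ % c) ∈ L := by rw [hd₁, hpeq f₁]; exact hpmem f₁
        have hL₂ : α ^ (m₂ / c * c + m₂ % c) ∈ L := by rw [hd₂, hpeq f₂]; exact hpmem f₂
        rw [hEq] at hL₁ hd₁
        have hee := key6 (m₂ % c) (m₁ / c) (m₂ / c) (Nat.mod_lt _ hc) he₁ he₂ hL₁ hL₂
        have hx : m₁ / c * c = m₂ / c * c := by rw [hee]
        have hmm : m₁ = m₂ := by omega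
        have hp : z + algebraMap F K f₁ * d = z + algebraMap F K f₂ * d := by
          rw [← hpeq f₁, ← hpeq f₂, ← hm₁, ← hm₂, hmm]
        have : algebraMap F K f₁ = algebraMap F K f₂ := by
          exact mul_right_cancel₀ hd (add_left_cancel hp)
        exact (algebraMap F K).injective this
      · intro r hr
        rw [Finset.mem_filter, Finset.mem_range] at hr
        obtain ⟨hrc, e, he, hmem⟩ := hr
        have hmem' := hmem
        rw [hLeq] at hmem'
        obtain ⟨f, hf⟩ := hmem'
        rw [Algebra.smul_def] at hf
        refine ⟨f, Finset.mem_univ _, ?_⟩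
        show dl (z + algebraMap F K f * d) % c = r
        have h1 : α ^ dl (z + algebraMap F K f * d) = α ^ (e * c + r) := by
          rw [hpeq f, hf]
        have h2 := hα.pow_inj (hdl (z + algebraMap F K f * d)) (hltn e r he hrc) h1
        rw [h2, mul_comm e c, Nat.mul_add_mod, Nat.mod_eq_of_lt hrc]
    rw [← hbijcard, Finset.card_univ, hq]
  -- the entry formula for blocks
  have hentry : ∀ (i j : Fin c) (s t : Fin l),
      blk n c l v i j s t =
        v ((((t : ℕ) + l - s - (if (i : ℕ) ≤ j then 0 else 1)) % l) * c
            + (((j : ℕ) + c - i) % c)) := by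
    intro i j s t
    have h1 : piPerm c l ((i : ℕ) * l + s) = (s : ℕ) * c + i := piPerm_eval c l i s hl s.isLt
    have h2 : piPerm c l ((j : ℕ) * l + t) = (t : ℕ) * c + j := piPerm_eval c l j t hl t.isLt
    simp only [blk, psiEnt, h1, h2]
    congr 1
    rw [hnlc]
    have hde : (t : ℕ) * c + j + l * c - ((s : ℕ) * c + i) =
        ((t : ℕ) + l - s - (if (i : ℕ) ≤ j then 0 else 1)) * c + (((j : ℕ) + c - i) % c) := by
      rcases le_or_gt (i : ℕ) j with hij | hij
      · rw [if_pos hij, mod_shift c i j i.isLt j.isLt, if_pos hij]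
        have e1 : ((t : ℕ) + l - s - 0) * c = (t : ℕ) * c + l * c - (s : ℕ) * c := by
          rw [Nat.sub_zero, Nat.sub_mul, Nat.add_mul]
        have e2 : (s : ℕ) * c ≤ l * c := Nat.mul_le_mul_right _ s.isLt.le
        have := i.isLt
        omega
      · rw [if_neg (by omega), mod_shift c i j i.isLt j.isLt, if_neg (by omega)]
        have e0 : ((t : ℕ) + l - s) * c = (t : ℕ) * c + l * c - (s : ℕ) * c := by
          rw [Nat.sub_mul, Nat.add_mul]
        have e1 : ((t : ℕ) + l - s - 1) * c = ((t : ℕ) + l - s) * c - 1 * c := by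
          rw [← Nat.sub_mul]
        have e2 : (s : ℕ) * c ≤ l * c := Nat.mul_le_mul_right _ s.isLt.le
        have e3 : c ≤ ((t : ℕ) + l - s) * c := by
          have h4 : 1 ≤ (t : ℕ) + l - s := by have := s.isLt; omega
          calc c = 1 * c := (one_mul c).symm
          _ ≤ ((t : ℕ) + l - s) * c := Nat.mul_le_mul_right _ h4
        have := i.isLt
        have := j.isLt
        omega
    rw [hde, mod_block l c _ _ hl (Nat.mod_lt _ hc)]
  -- block is a CPM when Pred holds
  have hCPM_of : ∀ (i j : Fin c) (e₀ : ℕ), e₀ < l →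
      α ^ (e₀ * c + (((j : ℕ) + c - i) % c)) ∈ L → IsCPM l (blk n c l v i j) := by
    intro i j e₀ he₀ hmem
    set δ : ℕ := if (i : ℕ) ≤ j then 0 else 1 with hδdef
    have hδ1 : δ ≤ 1 := by rw [hδdef]; split <;> omega
    refine ⟨e₀ + δ, fun s t => ?_⟩
    rw [hentry i j s t, hv]
    set r := ((j : ℕ) + c - i) % c with hrdef
    have hrc : r < c := Nat.mod_lt _ hc
    have hEl : ((t : ℕ) + l - s - δ) % l < l := Nat.mod_lt _ hl
    have hiff : ((t : ℕ) + l - s - δ) % l = e₀ ↔ ((t : ℕ) + l - s) % l = (e₀ + δ) % l := by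
      have h1 : 1 ≤ (t : ℕ) + l - s := by have := s.isLt; omega
      constructor
      · intro h
        have h2 : ((t : ℕ) + l - s - δ) + δ ≡ e₀ + δ [MOD l] :=
          Nat.ModEq.add_right δ (by rw [Nat.ModEq, h, Nat.mod_eq_of_lt he₀])
        rwa [show ((t : ℕ) + l - s - δ) + δ = (t : ℕ) + l - s from by omega] at h2
      · intro h
        have h2 : ((t : ℕ) + l - s - δ) + δ ≡ e₀ + δ [MOD l] := by
          rw [show ((t : ℕ) + l - s - δ) + δ = (t : ℕ) + l - s from by omega]
          exact h
        have h3 := Nat.ModEq.add_right_cancel' δ h2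
        rw [Nat.ModEq, Nat.mod_eq_of_lt he₀] at h3
        exact h3
    by_cases hcase : ((t : ℕ) + l - s) % l = (e₀ + δ) % l
    · rw [if_pos hcase]
      have hE : ((t : ℕ) + l - s - δ) % l = e₀ := hiff.mpr hcase
      rw [hE, if_pos hmem]
    · rw [if_neg hcase]
      rw [if_neg]
      intro hmem2
      exact hcase (hiff.mp (key6 r _ e₀ hrc hEl he₀ hmem2 hmem))
  -- block is zero when Pred fails
  have hzero_of : ∀ (i j : Fin c), ¬ Pred (((j : ℕ) + c - i) % c) → blk n c l v i j = 0 := by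
    intro i j hnp
    funext s t
    rw [hentry i j s t, hv]
    rw [if_neg]
    · rfl
    · intro hmem
      exact hnp ⟨_, Nat.mod_lt _ hl, hmem⟩
  -- CPM implies Pred
  have hPred_of_CPM : ∀ (i j : Fin c), IsCPM l (blk n c l v i j) →
      Pred (((j : ℕ) + c - i) % c) := by
    rintro i j ⟨d', hd'⟩
    have h1 := hd' ⟨0, hl⟩ ⟨d' % l, Nat.mod_lt _ hl⟩
    rw [if_pos (by
      show (d' % l + l - 0) % l = d' % l
      rw [Nat.sub_zero, Nat.add_mod_right, Nat.mod_mod_of_dvd _ dvd_rfl])] at h1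
    rw [hentry, hv] at h1
    by_cases hm : α ^ ((((d' % l : ℕ) + l - (0 : ℕ) -
        (if (i : ℕ) ≤ j then 0 else 1)) % l) * c + (((j : ℕ) + c - i) % c)) ∈ L
    · exact ⟨_, Nat.mod_lt _ hl, hm⟩
    · rw [if_neg hm] at h1
      exact absurd h1.symm one_ne_zero
  -- Pred implies block nonzero
  have hne_of_Pred : ∀ (i j : Fin c), Pred (((j : ℕ) + c - i) % c) →
      blk n c l v i j ≠ 0 := by
    rintro i j ⟨e₀, he₀, hmem⟩ hzero
    set δ : ℕ := if (i : ℕ) ≤ j then 0 else 1 with hδdef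
    have hδ1 : δ ≤ 1 := by rw [hδdef]; split <;> omega
    have hδl : (e₀ + δ) % l < l := Nat.mod_lt _ hl
    have h1 : blk n c l v i j ⟨0, hl⟩ ⟨(e₀ + δ) % l, hδl⟩ = 0 := by rw [hzero]; rfl
    rw [hentry, hv] at h1
    have hE : (((e₀ + δ) % l : ℕ) + l - (0 : ℕ) - δ) % l = e₀ := by
      rw [show ((e₀ + δ) % l + l - (0 : ℕ) - δ) = (e₀ + δ) % l + (l - δ) from by omega]
      rw [Nat.mod_add_mod]
      rw [show e₀ + δ + (l - δ) = e₀ + l from by omega]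
      rw [Nat.add_mod_right, Nat.mod_eq_of_lt he₀]
    rw [hE, if_pos hmem] at h1
    exact one_ne_zero h1
  have hmain : ∀ i j : Fin c,
      (IsCPM l (blk n c l v i j) ↔ Pred (((j : ℕ) + c - i) % c)) ∧
      (blk n c l v i j = 0 ↔ ¬ Pred (((j : ℕ) + c - i) % c)) := by
    intro i j
    refine ⟨⟨hPred_of_CPM i j, fun hp => ?_⟩,
      ⟨fun hz hp => hne_of_Pred i j hp hz, hzero_of i j⟩⟩
    obtain ⟨e₀, he₀, hm⟩ := hp
    exact hCPM_of i j e₀ he₀ hm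
  -- row/column counting
  have hrow : ∀ i : Fin c,
      (Finset.univ.filter fun j : Fin c => Pred (((j : ℕ) + c - i) % c)).card = q := by
    intro i
    rw [← hRcard]
    refine Finset.card_bij' (fun j _ => ((j : ℕ) + c - i) % c)
      (fun r _ => (⟨(r + i) % c, Nat.mod_lt _ hc⟩ : Fin c)) ?_ ?_ ?_ ?_
    · intro j hj
      rw [Finset.mem_filter] at hj ⊢
      exact ⟨Finset.mem_range.mpr (Nat.mod_lt _ hc), hj.2⟩
    · intro r hr
      rw [Finset.mem_filter] at hr ⊢
      refine ⟨Finset.mem_univ _, ?_⟩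
      have hrc : r < c := Finset.mem_range.mp hr.1
      have hcomp : (((r + (i : ℕ)) % c) + c - (i : ℕ)) % c = r := by
        rw [show ((r + (i : ℕ)) % c) + c - (i : ℕ) = ((r + (i : ℕ)) % c) + (c - i) from by
          have := i.isLt; omega]
        rw [Nat.mod_add_mod]
        rw [show r + (i : ℕ) + (c - (i : ℕ)) = r + c from by have := i.isLt; omega]
        rw [Nat.add_mod_right, Nat.mod_eq_of_lt hrc]
      exact hcomp.symm ▸ hr.2
    · intro j hj
      apply Fin.ext
      show (((j : ℕ) + c - i) % c + (i : ℕ)) % c = j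
      rw [Nat.mod_add_mod]
      rw [show (j : ℕ) + c - i + i = (j : ℕ) + c from by have := i.isLt; omega]
      rw [Nat.add_mod_right, Nat.mod_eq_of_lt j.isLt]
    · intro r hr
      rw [Finset.mem_filter, Finset.mem_range] at hr
      have hrc : r < c := hr.1
      show (((r + (i : ℕ)) % c) + c - (i : ℕ)) % c = r
      rw [show ((r + (i : ℕ)) % c) + c - (i : ℕ) = ((r + (i : ℕ)) % c) + (c - i) from by
        have := i.isLt; omega]
      rw [Nat.mod_add_mod]
      rw [show r + (i : ℕ) + (c - (i : ℕ)) = r + c from by have := i.isLt; omega]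
      rw [Nat.add_mod_right, Nat.mod_eq_of_lt hrc]
  have hcolinv : ∀ (j : Fin c) (x : ℕ), x < c →
      ((j : ℕ) + c - (((j : ℕ) + c - x) % c)) % c = x := by
    intro j x hx
    rcases le_or_gt x (j : ℕ) with h | h
    · rw [show (j : ℕ) + c - x = ((j : ℕ) - x) + c from by omega, Nat.add_mod_right,
        Nat.mod_eq_of_lt (show (j : ℕ) - x < c from by have := j.isLt; omega)]
      rw [show (j : ℕ) + c - ((j : ℕ) - x) = x + c from by omega, Nat.add_mod_right,
        Nat.mod_eq_of_lt hx]
    · rw [Nat.mod_eq_of_lt (show (j : ℕ) + c - x < c from by have := j.isLt; omega)]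
      rw [show (j : ℕ) + c - ((j : ℕ) + c - x) = x from by have := j.isLt; omega,
        Nat.mod_eq_of_lt hx]
  have hcol : ∀ j : Fin c,
      (Finset.univ.filter fun i : Fin c => Pred (((j : ℕ) + c - i) % c)).card = q := by
    intro j
    rw [← hRcard]
    refine Finset.card_bij' (fun i _ => ((j : ℕ) + c - i) % c)
      (fun r _ => (⟨((j : ℕ) + c - r) % c, Nat.mod_lt _ hc⟩ : Fin c)) ?_ ?_ ?_ ?_
    · intro i hi
      rw [Finset.mem_filter] at hi ⊢
      exact ⟨Finset.mem_range.mpr (Nat.mod_lt _ hc), hi.2⟩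
    · intro r hr
      rw [Finset.mem_filter, Finset.mem_range] at hr
      rw [Finset.mem_filter]
      refine ⟨Finset.mem_univ _, ?_⟩
      have hcomp : ((j : ℕ) + c - (((j : ℕ) + c - r) % c)) % c = r := hcolinv j r hr.1
      exact hcomp.symm ▸ hr.2
    · intro i hi
      apply Fin.ext
      show ((j : ℕ) + c - (((j : ℕ) + c - i) % c)) % c = i
      exact hcolinv j i i.isLt
    · intro r hr
      rw [Finset.mem_filter, Finset.mem_range] at hr
      show ((j : ℕ) + c - (((j : ℕ) + c - r) % c)) % c = r
      exact hcolinv j r hr.1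
  have hcardfin : (Finset.univ : Finset (Fin c)).card = c := by
    rw [Finset.card_univ, Fintype.card_fin]
  refine ⟨?_, ?_, ?_⟩
  · intro i j
    by_cases hp : Pred (((j : ℕ) + c - i) % c)
    · exact Or.inl ((hmain i j).1.mpr hp)
    · exact Or.inr ((hmain i j).2.mpr hp)
  · intro i
    have hfc : (Finset.univ.filter fun j : Fin c => IsCPM l (blk n c l v i j)) =
        Finset.univ.filter fun j : Fin c => Pred (((j : ℕ) + c - i) % c) :=
      Finset.filter_congr fun j _ => (hmain i j).1
    have hfz : (Finset.univ.filter fun j : Fin c => blk n c l v i j = 0) =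
        Finset.univ.filter fun j : Fin c => ¬ Pred (((j : ℕ) + c - i) % c) :=
      Finset.filter_congr fun j _ => (hmain i j).2
    refine ⟨by rw [hfc]; exact hrow i, ?_⟩
    rw [hfz, Finset.filter_not, Finset.card_sdiff_of_subset (Finset.filter_subset _ _), hcardfin,
      hrow i]
  · intro j
    have hfc : (Finset.univ.filter fun i : Fin c => IsCPM l (blk n c l v i j)) =
        Finset.univ.filter fun i : Fin c => Pred (((j : ℕ) + c - i) % c) :=
      Finset.filter_congr fun i _ => (hmain i j).1
    have hfz : (Finset.univ.filter fun i : Fin c => blk n c l v i j = 0) =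
        Finset.univ.filter fun i : Fin c => ¬ Pred (((j : ℕ) + c - i) % c) :=
      Finset.filter_congr fun i _ => (hmain i j).2
    refine ⟨by rw [hfc]; exact hcol j, ?_⟩
    rw [hfz, Finset.filter_not, Finset.card_sdiff_of_subset (Finset.filter_subset _ _), hcardfin,
      hcol j]

end Paper
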